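/- arXiv:2601.17537 — 2 statements merged into one kernel-verified Lean document; each statement's English description precedes it below -/
import Mathlib

section
/- For every P-automaton there exists a P-automaton without silent transitions (i.e. in which no transition is labelled by an identity discrete ipomset) that recognizes the same language. -/
open scoped Classical

namespace HDA

/-! ### Ipomsets over a fixed alphabet -/

structure PreIpomset (σ : Type) : Type 1 where
  carrier : Type
  fin : Finite carrier
  lt : carrier → carrier → Prop
  evord : carrier → carrier → Prop
  S : Set carrier
  T : Set carrier
  lab : carrier → σ

namespace PreIpomset

variable {σ : Type}

/-- The precedence order is empty. -/
def Discrete (P : PreIpomset σ) : Prop := ∀ x y, ¬ P.lt x y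

/-- Validity: `lt` is a strict partial order which is an interval order, `evord` is acyclic,
for distinct events exactly one of the four relations holds, sources are minimal and
targets are maximal.  (All ipomsets considered are interval.) -/
structure IsIpomset (P : PreIpomset σ) : Prop where
  lt_trans : ∀ x y z, P.lt x y → P.lt y z → P.lt x z
  lt_irrefl : ∀ x, ¬ P.lt x x
  evord_acyclic : ∀ x, ¬ Relation.TransGen P.evord x x
  total : ∀ x y : P.carrier, x ≠ y → P.lt x y ∨ P.lt y x ∨ P.evord x y ∨ P.evord y x
  lt_not_evord : ∀ x y, P.lt x y → ¬ P.evord x y ∧ ¬ P.evord y x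
  src_min : ∀ x ∈ P.S, ∀ y, ¬ P.lt y x
  tgt_max : ∀ x ∈ P.T, ∀ y, ¬ P.lt x y
  interval : ∀ w x y z, P.lt w x → P.lt y z → P.lt w z ∨ P.lt y x

/-- A conclist: a discrete ipomset with empty interfaces. -/
def IsConclist (P : PreIpomset σ) : Prop :=
  P.IsIpomset ∧ P.Discrete ∧ P.S = ∅ ∧ P.T = ∅

/-- A starter `⟨U∖A,U,U⟩`. -/
def IsStarter (P : PreIpomset σ) : Prop := P.IsIpomset ∧ P.Discrete ∧ P.T = Set.univ

/-- A terminator `⟨U,U,U∖B⟩`. -/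
def IsTerminator (P : PreIpomset σ) : Prop := P.IsIpomset ∧ P.Discrete ∧ P.S = Set.univ

/-- An identity `⟨U,U,U⟩`. -/
def IsIdentityIpomset (P : PreIpomset σ) : Prop :=
  P.IsIpomset ∧ P.Discrete ∧ P.S = Set.univ ∧ P.T = Set.univ

def IsProperStarter (P : PreIpomset σ) : Prop := P.IsStarter ∧ P.S ≠ Set.univ

def IsProperTerminator (P : PreIpomset σ) : Prop := P.IsTerminator ∧ P.T ≠ Set.univ

/-- Isomorphism of (pre)ipomsets. -/
def Iso (P Q : PreIpomset σ) : Prop :=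
  ∃ f : P.carrier ≃ Q.carrier,
    (∀ x y, P.lt x y ↔ Q.lt (f x) (f y)) ∧
    (∀ x y, P.evord x y ↔ Q.evord (f x) (f y)) ∧
    (∀ x, x ∈ P.S ↔ f x ∈ Q.S) ∧
    (∀ x, x ∈ P.T ↔ f x ∈ Q.T) ∧
    (∀ x, Q.lab (f x) = P.lab x)

/-- Restriction to a subset of events, with empty interfaces. -/
def restrict (P : PreIpomset σ) (K : Set P.carrier) : PreIpomset σ where
  carrier := {x : P.carrier // x ∈ K}
  fin := by haveI := P.fin; exact inferInstance
  lt := fun x y => P.lt x.val y.val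
  evord := fun x y => P.evord x.val y.val
  S := ∅
  T := ∅
  lab := fun x => P.lab x.val

/-- The source interface of `P` as a conclist. -/
def srcIface (P : PreIpomset σ) : PreIpomset σ := P.restrict P.S

/-- The target interface of `P` as a conclist. -/
def tgtIface (P : PreIpomset σ) : PreIpomset σ := P.restrict P.T

/-- The underlying conclist (forget interfaces). -/
def conclistOf (P : PreIpomset σ) : PreIpomset σ := { P with S := ∅, T := ∅ }

/-- The identity ipomset `⟨U,U,U⟩` on the conclist underlying `P`. -/
def idOf (P : PreIpomset σ) : PreIpomset σ := { P with S := Set.univ, T := Set.univ }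

/-- The discrete ipomset `⟨S,U,T⟩` on the conclist underlying `P`. -/
def withIfaces (P : PreIpomset σ) (S T : Set P.carrier) : PreIpomset σ :=
  { P with S := S, T := T }

/-- The starter `⟨U∖A,U,U⟩` on the conclist underlying `P`. -/
def starter (P : PreIpomset σ) (A : Set P.carrier) : PreIpomset σ :=
  { P with S := Aᶜ, T := Set.univ }

/-- The terminator `⟨U,U,U∖B⟩` on the conclist underlying `P`. -/
def terminator (P : PreIpomset σ) (B : Set P.carrier) : PreIpomset σ :=
  { P with S := Set.univ, T := Bᶜ }

/-- A matching `T_P ≅ S_Q`, i.e. an isomorphism of interface conclists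
along which `P` and `Q` may be glued. -/
structure Matching (P Q : PreIpomset σ) : Type where
  g : {x : P.carrier // x ∈ P.T} ≃ {y : Q.carrier // y ∈ Q.S}
  evord_iff : ∀ x y, P.evord x.val y.val ↔ Q.evord (g x).val (g y).val
  lab_eq : ∀ x, Q.lab (g x).val = P.lab x.val

def gluePOf (P Q : PreIpomset σ) :
    P.carrier ⊕ {y : Q.carrier // y ∉ Q.S} → Option P.carrier
  | Sum.inl x => some x
  | Sum.inr _ => none

noncomputable def glueQOf (P Q : PreIpomset σ) (m : Matching P Q) :
    P.carrier ⊕ {y : Q.carrier // y ∉ Q.S} → Option Q.carrier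
  | Sum.inl x => if h : x ∈ P.T then some (m.g ⟨x, h⟩).val else none
  | Sum.inr y => some y.val

/-- The gluing `P * Q` along a matching `T_P ≅ S_Q`. -/
noncomputable def glue (P Q : PreIpomset σ) (m : Matching P Q) : PreIpomset σ where
  carrier := P.carrier ⊕ {y : Q.carrier // y ∉ Q.S}
  fin := by haveI := P.fin; haveI := Q.fin; exact inferInstance
  lt := fun u v =>
    (∃ x x', gluePOf P Q u = some x ∧ gluePOf P Q v = some x' ∧ P.lt x x') ∨
    (∃ y y', glueQOf P Q m u = some y ∧ glueQOf P Q m v = some y' ∧ Q.lt y y') ∨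
    ((∃ x, gluePOf P Q u = some x ∧ x ∉ P.T) ∧
     (∃ y, glueQOf P Q m v = some y ∧ y ∉ Q.S))
  evord := fun u v =>
    (∃ x x', gluePOf P Q u = some x ∧ gluePOf P Q v = some x' ∧ P.evord x x') ∨
    (∃ y y', glueQOf P Q m u = some y ∧ glueQOf P Q m v = some y' ∧ Q.evord y y')
  S := {u | ∃ x, gluePOf P Q u = some x ∧ x ∈ P.S}
  T := {u | ∃ y, glueQOf P Q m u = some y ∧ y ∈ Q.T}
  lab := Sum.elim P.lab fun y => Q.lab y.val

/-- `R` is (isomorphic to) the gluing `P * Q`; in particular `T_P ≅ S_Q`. -/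
def GlueRel (P Q R : PreIpomset σ) : Prop :=
  ∃ m : Matching P Q, Iso (glue P Q m) R

/-- A choice of gluing (used when a matching is known to exist). -/
noncomputable def glueChoice (P Q : PreIpomset σ) : PreIpomset σ :=
  if h : Nonempty (Matching P Q) then glue P Q h.some else P

/-- `GluesTo l R`: `R` is the gluing of the nonempty list `l` of ipomsets. -/
inductive GluesTo : List (PreIpomset σ) → PreIpomset σ → Prop
  | single {P R : PreIpomset σ} : Iso P R → GluesTo [P] R
  | cons {P : PreIpomset σ} {l : List (PreIpomset σ)} {R' R : PreIpomset σ} :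
      GluesTo l R' → GlueRel P R' R → GluesTo (P :: l) R

/-- Proper starters and proper terminators alternate. -/
def Alternating (l : List (PreIpomset σ)) : Prop :=
  l.Chain' fun P Q => (IsProperStarter P ∧ IsProperTerminator Q) ∨
    (IsProperTerminator P ∧ IsProperStarter Q)

/-- `l` is a sparse step decomposition of `R`: either a single identity, or an
alternating sequence of proper starters and proper terminators gluing to `R`. -/
def IsSparseDecomp (l : List (PreIpomset σ)) (R : PreIpomset σ) : Prop :=
  GluesTo l R ∧
  ((∃ I, l = [I] ∧ IsIdentityIpomset I) ∨
   ((∀ P ∈ l, IsProperStarter P ∨ IsProperTerminator P) ∧ Alternating l))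

/-- `P ∈ iPoms^q`: the sparse step decomposition of `P` does not end with a
proper starter (i.e. it ends with a terminator or is a single identity). -/
def InQ (P : PreIpomset σ) : Prop :=
  ∃ l, IsSparseDecomp l P ∧ ∀ Q, l.getLast? = some Q → ¬ IsProperStarter Q

end PreIpomset

open PreIpomset

variable {σ : Type}

/-! ### Languages and rational operations -/

def glueLang (L M : Set (PreIpomset σ)) : Set (PreIpomset σ) :=
  {R | ∃ P ∈ L, ∃ Q ∈ M, GlueRel P Q R}

def powLang (L : Set (PreIpomset σ)) : ℕ → Set (PreIpomset σ)
  | 0 => L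
  | n + 1 => glueLang L (powLang L n)

/-- `L⁺ = ⋃_{n ≥ 1} Lⁿ`. -/
def plusLang (L : Set (PreIpomset σ)) : Set (PreIpomset σ) := ⋃ n, powLang L n

/-- Rational languages of (interval) ipomsets: generated from `∅` and singletons
(up to isomorphism) of starters and terminators by union, gluing composition and plus. -/
inductive Rational : Set (PreIpomset σ) → Prop
  | empty : Rational ∅
  | single {P : PreIpomset σ} : IsStarter P ∨ IsTerminator P → Rational {Q | Iso Q P}
  | union {L M : Set (PreIpomset σ)} : Rational L → Rational M → Rational (L ∪ M)
  | concat {L M : Set (PreIpomset σ)} : Rational L → Rational M → Rational (glueLang L M)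
  | plus {L : Set (PreIpomset σ)} : Rational L → Rational (plusLang L)

/-! ### P-automata -/

structure PAutomaton (σ : Type) : Type 1 where
  Q : Type
  E : Type
  src : E → Q
  tgt : E → Q
  lab : E → PreIpomset σ
  mu : Q → PreIpomset σ
  start : Set Q
  accept : Set Q

namespace PAutomaton

variable {σ : Type}

/-- The axioms of a P-automaton: finite sets of states and transitions, states
labelled by conclists, transitions by interval ipomsets, with
`μ(s(e)) ≅ S_{λ(e)}` and `μ(t(e)) ≅ T_{λ(e)}`. -/
def IsPA (A : PAutomaton σ) : Prop :=
  Finite A.Q ∧ Finite A.E ∧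
  (∀ q, (A.mu q).IsConclist) ∧ (∀ e, (A.lab e).IsIpomset) ∧
  (∀ e, Iso (A.lab e).srcIface (A.mu (A.src e))) ∧
  (∀ e, Iso (A.lab e).tgtIface (A.mu (A.tgt e)))

/-- ST-automaton: every label is a starter or a terminator. -/
def IsST (A : PAutomaton σ) : Prop := ∀ e, IsStarter (A.lab e) ∨ IsTerminator (A.lab e)

/-- gST-automaton: every label is discrete. -/
def IsGST (A : PAutomaton σ) : Prop := ∀ e, (A.lab e).Discrete

/-- No transition is labelled by an identity. -/
def NoSilent (A : PAutomaton σ) : Prop := ∀ e, ¬ IsIdentityIpomset (A.lab e)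

/-- A reduced gST-automaton: no silent transitions and conditions (a)–(f). -/
def Reduced (A : PAutomaton σ) : Prop :=
  NoSilent A ∧
  (∀ e, A.tgt e ∉ A.start) ∧
  (∀ e, A.src e ∉ A.accept) ∧
  (∀ e, (A.lab e).T = Set.univ → A.tgt e ∈ A.accept) ∧
  (∀ e, (A.lab e).S = Set.univ → A.src e ∈ A.start) ∧
  (∀ e e', A.src e ∈ A.start → A.src e' = A.src e → e' = e) ∧
  (∀ e e', A.tgt e ∈ A.accept → A.tgt e' = A.tgt e → e' = e)

/-- Paths in a P-automaton, from a state to a state. -/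
inductive Path (A : PAutomaton σ) : A.Q → A.Q → Type
  | nil (q : A.Q) : Path A q q
  | cons (e : A.E) {r : A.Q} (rest : Path A (A.tgt e) r) : Path A (A.src e) r

/-- The (interval) ipomset recognized by a path, up to isomorphism:
the gluing of the labels of its transitions (an identity for a constant path). -/
inductive Rec {A : PAutomaton σ} : ∀ {p r : A.Q}, Path A p r → PreIpomset σ → Prop
  | nil (q : A.Q) (R : PreIpomset σ) : Iso (A.mu q).idOf R → Rec (Path.nil q) R
  | cons (e : A.E) {r : A.Q} (rest : Path A (A.tgt e) r) {R' R : PreIpomset σ} :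
      Rec rest R' → GlueRel (A.lab e) R' R → Rec (Path.cons e rest) R

/-- The language of a P-automaton. -/
def lang (A : PAutomaton σ) : Set (PreIpomset σ) :=
  {R | ∃ p r, ∃ α : Path A p r, p ∈ A.start ∧ r ∈ A.accept ∧ Rec α R}

/-- Dimension of a transition. -/
noncomputable def dim (A : PAutomaton σ) (e : A.E) : ℕ := Nat.card (A.lab e).carrier

/-- Number of bad starter transitions of dimension `n`. -/
noncomputable def bst (A : PAutomaton σ) (n : ℕ) : ℕ :=
  Nat.card {e : A.E // IsProperStarter (A.lab e) ∧ A.tgt e ∉ A.accept ∧ A.dim e = n}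

/-- Number of bad terminator transitions of dimension `n`. -/
noncomputable def btt (A : PAutomaton σ) (n : ℕ) : ℕ :=
  Nat.card {e : A.E // IsProperTerminator (A.lab e) ∧ A.src e ∉ A.start ∧ A.dim e = n}

/-- The automaton `𝒜_c`: remove the starter transition `c`; for every transition `e`
out of `t(c)` add a transition `e*` from `s(c)` to `t(e)` labelled `λ(c) * λ(e)`. -/
noncomputable def Ac (A : PAutomaton σ) (c : A.E) : PAutomaton σ where
  Q := A.Q
  E := {e : A.E // e ≠ c} ⊕ {e : A.E // A.src e = A.tgt c}
  src := Sum.elim (fun e => A.src e.val) fun _ => A.src c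
  tgt := Sum.elim (fun e => A.tgt e.val) fun e => A.tgt e.val
  lab := Sum.elim (fun e => A.lab e.val) fun e => glueChoice (A.lab c) (A.lab e.val)
  mu := A.mu
  start := A.start
  accept := A.accept

/-- Disjoint union of two P-automata. -/
def sumAut (A B : PAutomaton σ) : PAutomaton σ where
  Q := A.Q ⊕ B.Q
  E := A.E ⊕ B.E
  src := Sum.elim (Sum.inl ∘ A.src) (Sum.inr ∘ B.src)
  tgt := Sum.elim (Sum.inl ∘ A.tgt) (Sum.inr ∘ B.tgt)
  lab := Sum.elim A.lab B.lab
  mu := Sum.elim A.mu B.mu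
  start := Sum.inl '' A.start ∪ Sum.inr '' B.start
  accept := Sum.inl '' A.accept ∪ Sum.inr '' B.accept

/-- Concatenation `𝒜 * ℬ`: disjoint union together with identity-labelled transitions
from accepting states of `𝒜` to initial states of `ℬ` with isomorphic state labels. -/
def concatAut (A B : PAutomaton σ) : PAutomaton σ where
  Q := A.Q ⊕ B.Q
  E := A.E ⊕ B.E ⊕
    {pq : A.Q × B.Q // pq.1 ∈ A.accept ∧ pq.2 ∈ B.start ∧ Iso (A.mu pq.1) (B.mu pq.2)}
  src := Sum.elim (Sum.inl ∘ A.src)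
    (Sum.elim (Sum.inr ∘ B.src) fun pq => Sum.inl pq.val.1)
  tgt := Sum.elim (Sum.inl ∘ A.tgt)
    (Sum.elim (Sum.inr ∘ B.tgt) fun pq => Sum.inr pq.val.2)
  lab := Sum.elim A.lab (Sum.elim B.lab fun pq => (A.mu pq.val.1).idOf)
  mu := Sum.elim A.mu B.mu
  start := Sum.inl '' A.start
  accept := Sum.inr '' B.accept

/-- Kleene plus `𝒜⁺`: add identity-labelled transitions from accepting states
to initial states with isomorphic state labels. -/
def plusAut (A : PAutomaton σ) : PAutomaton σ where
  Q := A.Q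
  E := A.E ⊕
    {pq : A.Q × A.Q // pq.1 ∈ A.accept ∧ pq.2 ∈ A.start ∧ Iso (A.mu pq.1) (A.mu pq.2)}
  src := Sum.elim A.src fun pq => pq.val.1
  tgt := Sum.elim A.tgt fun pq => pq.val.2
  lab := Sum.elim A.lab fun pq => (A.mu pq.val.1).idOf
  mu := A.mu
  start := A.start
  accept := A.accept

end PAutomaton

/-! ### Partial HDAs -/

/-- `g` exhibits `V` as the sub-conclist of `U` obtained by removing the events in `K`. -/
def IsFaceEmbed (U : PreIpomset σ) (K : Set U.carrier) (V : PreIpomset σ)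
    (g : V.carrier → U.carrier) : Prop :=
  Function.Injective g ∧ Set.range g = Kᶜ ∧
  (∀ u v, V.evord u v ↔ U.evord (g u) (g v)) ∧
  (∀ u, U.lab (g u) = V.lab u)

/-- The data of a partial higher-dimensional automaton: cells labelled by conclists,
partial face maps, initial and accepting cells. -/
structure PrePHDA (σ : Type) : Type 1 where
  cell : Type
  ev : cell → PreIpomset σ
  face : (x : cell) → Set (ev x).carrier → Set (ev x).carrier → Option cell
  start : Set cell
  accept : Set cell

namespace PrePHDA

variable {σ : Type}

/-- The lax precubical identity: whenever `δ_{A,B}(x)` and `δ_{C,D}(δ_{A,B}(x))` are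
defined, `δ_{A∪C,B∪D}(x)` is defined and equal to the composite. -/
def IsLax (X : PrePHDA σ) : Prop :=
  ∀ x (A B : Set (X.ev x).carrier) y, X.face x A B = some y →
    ∀ g, IsFaceEmbed (X.ev x) (A ∪ B) (X.ev y) g →
      ∀ (C D : Set (X.ev y).carrier) z, X.face y C D = some z →
        X.face x (A ∪ g '' C) (B ∪ g '' D) = some z

/-- The axioms of a partial HDA. -/
def IsPHDA (X : PrePHDA σ) : Prop :=
  (∀ x, (X.ev x).IsConclist) ∧
  (∀ x, X.face x ∅ ∅ = some x) ∧
  (∀ x A B y, X.face x A B = some y →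
    Disjoint A B ∧ ∃ g, IsFaceEmbed (X.ev x) (A ∪ B) (X.ev y) g) ∧
  IsLax X

/-- Strictness: `δ_{C,D} ∘ δ_{A,B} = δ_{A∪C,B∪D}` as partial functions. -/
def IsStrict (X : PrePHDA σ) : Prop :=
  IsPHDA X ∧
  (∀ x (A B : Set (X.ev x).carrier) y, X.face x A B = some y →
    ∀ g, IsFaceEmbed (X.ev x) (A ∪ B) (X.ev y) g →
      ∀ C D : Set (X.ev y).carrier,
        X.face x (A ∪ g '' C) (B ∪ g '' D) = X.face y C D) ∧
  (∀ x (A B C D : Set (X.ev x).carrier),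
    Disjoint (A ∪ C) (B ∪ D) → C ∪ D ⊆ (A ∪ B)ᶜ →
    X.face x A B = none → X.face x (A ∪ C) (B ∪ D) = none)

/-- Paths in a partial HDA: sequences of upsteps and downsteps. -/
inductive Path (X : PrePHDA σ) : X.cell → X.cell → Type
  | nil (x : X.cell) : Path X x x
  | up {x z : X.cell} (y : X.cell) (A : Set (X.ev y).carrier)
      (h : X.face y A ∅ = some x) (rest : Path X y z) : Path X x z
  | down {z w : X.cell} (y : X.cell) (B : Set (X.ev y).carrier)
      (h : X.face y ∅ B = some z) (rest : Path X z w) : Path X y w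

/-- Directions of the steps of a path (`true` = upstep). -/
def Path.dirs {X : PrePHDA σ} : {x z : X.cell} → Path X x z → List Bool
  | _, _, .nil _ => []
  | _, _, .up _ _ _ rest => true :: rest.dirs
  | _, _, .down _ _ _ rest => false :: rest.dirs

/-- A path is sparse if upsteps and downsteps alternate. -/
def Path.Sparse {X : PrePHDA σ} {x z : X.cell} (α : Path X x z) : Prop :=
  α.dirs.Chain' (· ≠ ·)

/-- Concatenation of paths. -/
def Path.comp {X : PrePHDA σ} : {x y z : X.cell} → Path X x y → Path X y z → Path X x z
  | _, _, _, .nil _, β => β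
  | _, _, _, .up y A h rest, β => .up y A h (rest.comp β)
  | _, _, _, .down y B h rest, β => .down y B h (rest.comp β)

/-- The ipomset recognized by a path, up to isomorphism: the gluing of the starters
and terminators of its steps (an identity for a constant path). -/
inductive Rec {X : PrePHDA σ} : ∀ {x z : X.cell}, Path X x z → PreIpomset σ → Prop
  | nil (x : X.cell) (R : PreIpomset σ) :
      Iso (X.ev x).idOf R → Rec (Path.nil x) R
  | up {x z : X.cell} (y : X.cell) (A : Set (X.ev y).carrier)
      (h : X.face y A ∅ = some x) (rest : Path X y z) {R' R : PreIpomset σ} :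
      Rec rest R' → GlueRel ((X.ev y).starter A) R' R → Rec (Path.up y A h rest) R
  | down {z w : X.cell} (y : X.cell) (B : Set (X.ev y).carrier)
      (h : X.face y ∅ B = some z) (rest : Path X z w) {R' R : PreIpomset σ} :
      Rec rest R' → GlueRel ((X.ev y).terminator B) R' R → Rec (Path.down y B h rest) R

/-- The language of a partial HDA. -/
def lang (X : PrePHDA σ) : Set (PreIpomset σ) :=
  {R | ∃ x z, ∃ α : Path X x z, x ∈ X.start ∧ z ∈ X.accept ∧ Rec α R}

/-- `X(K,P)`: cells reachable from `K` by a path recognizing `P`. -/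
def track (X : PrePHDA σ) (K : Set X.cell) (P : PreIpomset σ) : Set X.cell :=
  {x | ∃ s, ∃ α : Path X s x, s ∈ K ∧ Rec α P}

/-- Deterministic partial HDA: at most one initial cell per conclist, and lower
face maps are "injective" in the appropriate sense. -/
def Deterministic (X : PrePHDA σ) : Prop :=
  (∀ x y, x ∈ X.start → y ∈ X.start → Iso (X.ev x) (X.ev y) → x = y) ∧
  (∀ (y y' : X.cell) (A : Set (X.ev y).carrier) (A' : Set (X.ev y').carrier)
      (x : X.cell), X.face y A ∅ = some x → X.face y' A' ∅ = some x →
    (∃ f : (X.ev y).carrier ≃ (X.ev y').carrier,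
      (∀ u v, (X.ev y).evord u v ↔ (X.ev y').evord (f u) (f v)) ∧
      (∀ u, (X.ev y').lab (f u) = (X.ev y).lab u) ∧ f '' A = A') → y = y')

end PrePHDA

/-! ### Relational HDAs -/

/-- The data of a relational HDA: face relations instead of partial face maps. -/
structure PreRHDA (σ : Type) : Type 1 where
  cell : Type
  ev : cell → PreIpomset σ
  face : (x : cell) → Set (ev x).carrier → Set (ev x).carrier → Set cell
  start : Set cell
  accept : Set cell

namespace PreRHDA

variable {σ : Type}

/-- The axioms of a relational HDA, with the lax precubical identity
`δ_{C,D} ∘ δ_{A,B} ⊆ δ_{A∪C,B∪D}`. -/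
def IsRHDA (X : PreRHDA σ) : Prop :=
  (∀ x, (X.ev x).IsConclist) ∧
  (∀ x, X.face x ∅ ∅ = {x}) ∧
  (∀ x A B y, y ∈ X.face x A B →
    Disjoint A B ∧ ∃ g, IsFaceEmbed (X.ev x) (A ∪ B) (X.ev y) g) ∧
  (∀ x (A B : Set (X.ev x).carrier) y, y ∈ X.face x A B →
    ∀ g, IsFaceEmbed (X.ev x) (A ∪ B) (X.ev y) g →
      ∀ (C D : Set (X.ev y).carrier) z, z ∈ X.face y C D →
        z ∈ X.face x (A ∪ g '' C) (B ∪ g '' D))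

/-- Paths in a relational HDA. -/
inductive Path (X : PreRHDA σ) : X.cell → X.cell → Type 1
  | nil (x : X.cell) : Path X x x
  | up {x z : X.cell} (y : X.cell) (A : Set (X.ev y).carrier)
      (h : x ∈ X.face y A ∅) (rest : Path X y z) : Path X x z
  | down {z w : X.cell} (y : X.cell) (B : Set (X.ev y).carrier)
      (h : z ∈ X.face y ∅ B) (rest : Path X z w) : Path X y w

/-- The ipomset recognized by a path in a relational HDA. -/
inductive Rec {X : PreRHDA σ} : ∀ {x z : X.cell}, Path X x z → PreIpomset σ → Prop
  | nil (x : X.cell) (R : PreIpomset σ) :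
      Iso (X.ev x).idOf R → Rec (Path.nil x) R
  | up {x z : X.cell} (y : X.cell) (A : Set (X.ev y).carrier)
      (h : x ∈ X.face y A ∅) (rest : Path X y z) {R' R : PreIpomset σ} :
      Rec rest R' → GlueRel ((X.ev y).starter A) R' R → Rec (Path.up y A h rest) R
  | down {z w : X.cell} (y : X.cell) (B : Set (X.ev y).carrier)
      (h : z ∈ X.face y ∅ B) (rest : Path X z w) {R' R : PreIpomset σ} :
      Rec rest R' → GlueRel ((X.ev y).terminator B) R' R → Rec (Path.down y B h rest) R

/-- The language of a relational HDA. -/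
def lang (X : PreRHDA σ) : Set (PreIpomset σ) :=
  {R | ∃ x z, ∃ α : Path X x z, x ∈ X.start ∧ z ∈ X.accept ∧ Rec α R}

/-- The ST-automaton `ST(X)` of a relational HDA `X`: states are cells, transitions
mimic the starting and terminating of events. -/
def stAut (X : PreRHDA σ) : PAutomaton σ where
  Q := X.cell
  E := (Σ q : X.cell, Σ A : Set (X.ev q).carrier, {p : X.cell // p ∈ X.face q A ∅}) ⊕
       (Σ q : X.cell, Σ B : Set (X.ev q).carrier, {r : X.cell // r ∈ X.face q ∅ B})
  src := Sum.elim (fun t => t.2.2.val) fun t => t.1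
  tgt := Sum.elim (fun t => t.1) fun t => t.2.2.val
  lab := Sum.elim (fun t => (X.ev t.1).starter t.2.1) fun t => (X.ev t.1).terminator t.2.1
  mu := X.ev
  start := X.start
  accept := X.accept

end PreRHDA

/-! ### The partial HDA of a reduced gST-automaton -/

open PAutomaton

/-- The cell representing a state `q` in `X(𝒜)`: `q` is merged with a terminator
transition out of it or a starter transition into it, if such exists. -/
noncomputable def cellOfState (A : PAutomaton σ) (q : A.Q) : A.E ⊕ A.Q :=
  if h : ∃ e, IsTerminator (A.lab e) ∧ A.src e = q then Sum.inl h.choose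
  else if h' : ∃ e, IsStarter (A.lab e) ∧ A.tgt e = q then Sum.inl h'.choose
  else Sum.inr q

/-- `X(𝒜)`: cells are `(Q ⊔ E)/∼`, with the only defined (nontrivial) face maps
`δ⁰_{U∖S}([e]) = [s(e)]` and `δ¹_{U∖T}([e]) = [t(e)]` for `λ(e) = ⟨S,U,T⟩`. -/
noncomputable def XofA (A : PAutomaton σ) : PrePHDA σ where
  cell := A.E ⊕ A.Q
  ev := Sum.elim (fun e => (A.lab e).conclistOf) A.mu
  face := fun x =>
    match x with
    | Sum.inl e => fun As Bs =>
        if As = ∅ ∧ Bs = ∅ then some (Sum.inl e)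
        else if As = (A.lab e).Sᶜ ∧ Bs = ∅ then some (cellOfState A (A.src e))
        else if As = ∅ ∧ Bs = (A.lab e).Tᶜ then some (cellOfState A (A.tgt e))
        else none
    | Sum.inr q => fun As Bs =>
        if As = ∅ ∧ Bs = ∅ then some (Sum.inr q) else none
  start := cellOfState A '' A.start
  accept := cellOfState A '' A.accept

end HDA

/-!
Silent transitions are removed by the usual ε-closure. The new automaton keeps the states of `A`;
its transitions are the pairs `(p, e)` of a non-silent transition `e` and a state `p` from which
`s(e)` is reachable along silent transitions, and a state accepts if it silently reaches an
accepting state. An identity is a unit for gluing, so deleting silent transitions from a path, or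
inserting them, does not change the recognized ipomset. Insertion needs a matching between the
identity and the ipomset recognized by the rest of the path; it exists because the source
interface of that ipomset is the conclist labelling the state where the path starts.
-/

namespace HDA

namespace PreIpomset

variable {σ : Type}

theorem Iso.refl (P : PreIpomset σ) : Iso P P :=
  ⟨Equiv.refl _, fun _ _ => Iff.rfl, fun _ _ => Iff.rfl, fun _ => Iff.rfl,
    fun _ => Iff.rfl, fun _ => rfl⟩

theorem Iso.symm {P Q : PreIpomset σ} (h : Iso P Q) : Iso Q P := by
  obtain ⟨f, hlt, hev, hS, hT, hlab⟩ := h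
  refine ⟨f.symm, fun x y => ?_, fun x y => ?_, fun x => ?_, fun x => ?_, fun x => ?_⟩
  · simpa using (hlt (f.symm x) (f.symm y)).symm
  · simpa using (hev (f.symm x) (f.symm y)).symm
  · simpa using (hS (f.symm x)).symm
  · simpa using (hT (f.symm x)).symm
  · simpa using (hlab (f.symm x)).symm

theorem Iso.trans {P Q R : PreIpomset σ} (h : Iso P Q) (h' : Iso Q R) : Iso P R := by
  obtain ⟨f, hlt, hev, hS, hT, hlab⟩ := h
  obtain ⟨g, hlt', hev', hS', hT', hlab'⟩ := h'
  exact ⟨f.trans g, fun x y => (hlt x y).trans (hlt' _ _), fun x y => (hev x y).trans (hev' _ _),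
    fun x => (hS x).trans (hS' _), fun x => (hT x).trans (hT' _),
    fun x => (hlab' _).trans (hlab _)⟩

theorem Iso.srcIface {P Q : PreIpomset σ} (h : Iso P Q) : Iso P.srcIface Q.srcIface := by
  obtain ⟨f, hlt, hev, hS, -, hlab⟩ := h
  exact ⟨f.subtypeEquiv hS, fun x y => hlt x.1 y.1, fun x y => hev x.1 y.1,
    fun _ => Iff.rfl, fun _ => Iff.rfl, fun x => hlab x.1⟩

theorem Iso.idOf {P Q : PreIpomset σ} (h : Iso P Q) : Iso P.idOf Q.idOf := by
  obtain ⟨f, hlt, hev, -, -, hlab⟩ := h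
  exact ⟨f, hlt, hev, fun _ => Iff.rfl, fun _ => Iff.rfl, hlab⟩

theorem Iso.discrete {P Q : PreIpomset σ} (h : Iso P Q) (hQ : Q.Discrete) : P.Discrete := by
  obtain ⟨f, hlt, -⟩ := h
  exact fun x y hxy => hQ (f x) (f y) ((hlt x y).mp hxy)

theorem srcIface_idOf_iso {P : PreIpomset σ} (hS : P.S = ∅) (hT : P.T = ∅) :
    Iso P.idOf.srcIface P := by
  refine ⟨Equiv.Set.univ P.carrier, fun _ _ => Iff.rfl, fun _ _ => Iff.rfl,
    fun _ => ?_, fun _ => ?_, fun _ => rfl⟩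
  · rw [hS]; rfl
  · rw [hT]; rfl

theorem IsIdentityIpomset.srcIface_eq_tgtIface {P : PreIpomset σ} (hP : P.IsIdentityIpomset) :
    P.srcIface = P.tgtIface := by
  rw [srcIface, tgtIface, hP.2.2.1, hP.2.2.2]

section Glue

variable {P Q : PreIpomset σ} (m : Matching P Q)

theorem glue_lt_inl_inl (x y : P.carrier) :
    (glue P Q m).lt (Sum.inl x) (Sum.inl y) ↔
      P.lt x y ∨
        ∃ (hx : x ∈ P.T) (hy : y ∈ P.T), Q.lt (m.g ⟨x, hx⟩) (m.g ⟨y, hy⟩) := by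
  by_cases hx : x ∈ P.T <;> by_cases hy : y ∈ P.T <;>
    simp [glue, gluePOf, glueQOf, hx, hy]

theorem glue_evord_inl_inl (x y : P.carrier) :
    (glue P Q m).evord (Sum.inl x) (Sum.inl y) ↔ P.evord x y := by
  by_cases hx : x ∈ P.T <;> by_cases hy : y ∈ P.T <;>
    simp [glue, gluePOf, glueQOf, hx, hy, ← m.evord_iff]

theorem inl_mem_glue_S {x : P.carrier} :
    (Sum.inl x : (glue P Q m).carrier) ∈ (glue P Q m).S ↔ x ∈ P.S :=
  ⟨fun ⟨_, hx, hS⟩ => Option.some_inj.mp hx ▸ hS, fun h => ⟨x, rfl, h⟩⟩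

theorem inr_notMem_glue_S (y : {y // y ∉ Q.S}) :
    (Sum.inr y : (glue P Q m).carrier) ∉ (glue P Q m).S :=
  fun ⟨_, hy, _⟩ => by cases hy

theorem inl_mem_glue_T {x : P.carrier} :
    (Sum.inl x : (glue P Q m).carrier) ∈ (glue P Q m).T ↔
      ∃ hx : x ∈ P.T, (m.g ⟨x, hx⟩).1 ∈ Q.T := by
  change (∃ y, glueQOf P Q m (Sum.inl x) = some y ∧ y ∈ Q.T) ↔ _
  by_cases hx : x ∈ P.T <;> simp [glueQOf, hx]

theorem inr_mem_glue_T (y : {y // y ∉ Q.S}) :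
    (Sum.inr y : (glue P Q m).carrier) ∈ (glue P Q m).T ↔ y.1 ∈ Q.T :=
  ⟨fun ⟨_, hy, hT⟩ => Option.some_inj.mp hy ▸ hT, fun h => ⟨_, rfl, h⟩⟩

theorem glue_iso_of_isIdentity (hD : P.Discrete) (hS : P.S = Set.univ)
    (hT : P.T = Set.univ) : Iso (glue P Q m) Q := by
  have hTm : ∀ x, x ∈ P.T := by simp [hT]
  obtain ⟨f, hf_inl, hf_inr⟩ : ∃ f : (glue P Q m).carrier ≃ Q.carrier,
      (∀ x, f (Sum.inl x) = m.g ⟨x, hTm x⟩) ∧ ∀ y, f (Sum.inr y) = y :=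
    ⟨(Equiv.sumCongr ((Equiv.subtypeUnivEquiv hTm).symm.trans m.g) (Equiv.refl _)).trans
      (Equiv.sumCompl (· ∈ Q.S)), fun _ => rfl, fun _ => rfl⟩
  refine ⟨f, ?_, ?_, ?_, ?_, ?_⟩
  · rintro (x | x) (y | y) <;> simp only [hf_inl, hf_inr] <;>
      simp [glue, gluePOf, glueQOf, hTm, hD _ _]
  · rintro (x | x) (y | y) <;> simp only [hf_inl, hf_inr] <;>
      simp [glue, gluePOf, glueQOf, hTm, ← m.evord_iff]
  · rintro (x | y)
    · exact iff_of_true ((inl_mem_glue_S m).mpr (hS ▸ Set.mem_univ x)) (hf_inl x ▸ (m.g _).2)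
    · exact iff_of_false (inr_notMem_glue_S m y) (hf_inr y ▸ y.2)
  · rintro (x | y)
    · exact (inl_mem_glue_T m).trans (by simp [hf_inl, hTm])
    · exact (inr_mem_glue_T m y).trans (by rw [hf_inr])
  · rintro (x | x) <;> simp only [hf_inl, hf_inr] <;> simp [glue, m.lab_eq]

theorem srcIface_glue_iso (hQ : Q.srcIface.Discrete) :
    Iso P.srcIface (glue P Q m).srcIface := by
  have hsurj : ∀ u ∈ (glue P Q m).S, ∃ x ∈ P.S, Sum.inl x = u := by
    rintro (x | y) hu
    · exact ⟨x, (inl_mem_glue_S m).mp hu, rfl⟩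
    · exact absurd hu (inr_notMem_glue_S m y)
  let f : P.srcIface.carrier ≃ (glue P Q m).srcIface.carrier :=
    Equiv.ofBijective (fun x => ⟨Sum.inl x.1, x.1, rfl, x.2⟩)
      ⟨fun x y h => Subtype.ext (Sum.inl_injective (congrArg Subtype.val h)),
        fun u => by
          obtain ⟨x, hx, hxu⟩ := hsurj u.1 u.2
          exact ⟨⟨x, hx⟩, Subtype.ext hxu⟩⟩
  refine ⟨f, fun x y => ?_, fun x y => glue_evord_inl_inl m x.1 y.1 |>.symm,
    fun _ => Iff.rfl, fun _ => Iff.rfl, fun _ => rfl⟩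
  refine ((glue_lt_inl_inl m x.1 y.1).trans (or_iff_left ?_)).symm
  rintro ⟨hx, hy, hlt⟩
  exact hQ _ _ hlt

end Glue

theorem GlueRel.iso_of_isIdentity {P R' R : PreIpomset σ} (hP : P.IsIdentityIpomset)
    (h : GlueRel P R' R) : Iso R' R := by
  obtain ⟨m, hm⟩ := h
  exact (glue_iso_of_isIdentity m hP.2.1 hP.2.2.1 hP.2.2.2).symm.trans hm

theorem glueRel_of_isIdentity {P R : PreIpomset σ} (hP : P.IsIdentityIpomset)
    (h : Iso P.tgtIface R.srcIface) : GlueRel P R R := by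
  obtain ⟨f, -, hev, -, -, hlab⟩ := h
  let m : Matching P R := ⟨f, hev, hlab⟩
  exact ⟨m, glue_iso_of_isIdentity m hP.2.1 hP.2.2.1 hP.2.2.2⟩

theorem GlueRel.srcIface_iso {P Q R : PreIpomset σ} (h : GlueRel P Q R)
    (hQ : Q.srcIface.Discrete) : Iso R.srcIface P.srcIface := by
  obtain ⟨m, hm⟩ := h
  exact hm.symm.srcIface.trans (srcIface_glue_iso m hQ).symm

end PreIpomset

namespace PAutomaton

open PreIpomset

variable {σ : Type} {A : PAutomaton σ}

theorem Rec.of_iso {p r : A.Q} {α : Path A p r} {R R' : PreIpomset σ} (h : Rec α R)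
    (hR : Iso R R') : Rec α R' := by
  cases h with
  | nil _ _ h => exact .nil _ _ (h.trans hR)
  | cons e rest hrest hglue =>
    obtain ⟨m, hm⟩ := hglue
    exact .cons e rest hrest ⟨m, hm.trans hR⟩

theorem Rec.srcIface_iso (hA : A.IsPA) {p r : A.Q} {α : Path A p r} {R : PreIpomset σ}
    (h : Rec α R) : Iso R.srcIface (A.mu p) := by
  obtain ⟨-, -, hmu, -, hsrc, -⟩ := hA
  induction h with
  | nil q R h => exact h.symm.srcIface.trans (srcIface_idOf_iso (hmu q).2.2.1 (hmu q).2.2.2)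
  | cons e _ _ hglue ih => exact (hglue.srcIface_iso (ih.discrete (hmu _).2.1)).trans (hsrc e)

def SilentStep (A : PAutomaton σ) (p q : A.Q) : Prop :=
  ∃ e, (A.lab e).IsIdentityIpomset ∧ A.src e = p ∧ A.tgt e = q

def SilentReach (A : PAutomaton σ) : A.Q → A.Q → Prop :=
  Relation.ReflTransGen A.SilentStep

theorem SilentReach.mu_iso (hA : A.IsPA) {p q : A.Q} (h : A.SilentReach p q) :
    Iso (A.mu p) (A.mu q) := by
  obtain ⟨-, -, -, -, hsrc, htgt⟩ := hA
  induction h with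
  | refl => exact Iso.refl _
  | tail _ hstep ih =>
    obtain ⟨e, he, rfl, rfl⟩ := hstep
    have hsrc := hsrc e
    rw [he.srcIface_eq_tgtIface] at hsrc
    exact ih.trans (hsrc.symm.trans (htgt e))

theorem Rec.cons_silent (hA : A.IsPA) {e : A.E} (he : (A.lab e).IsIdentityIpomset) {r : A.Q}
    {α : Path A (A.tgt e) r} {R : PreIpomset σ} (h : Rec α R) : Rec (Path.cons e α) R :=
  .cons e α h (glueRel_of_isIdentity he ((hA.2.2.2.2.2 e).trans (h.srcIface_iso hA).symm))

theorem SilentReach.exists_rec (hA : A.IsPA) {p q r : A.Q} (hs : A.SilentReach p q)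
    {α : Path A q r} {R : PreIpomset σ} (h : Rec α R) : ∃ β : Path A p r, Rec β R := by
  induction hs using Relation.ReflTransGen.head_induction_on with
  | refl => exact ⟨α, h⟩
  | head hstep _ ih =>
    obtain ⟨β, hβ⟩ := ih
    obtain ⟨e, he, rfl, rfl⟩ := hstep
    exact ⟨.cons e β, hβ.cons_silent hA he⟩

def removeSilent (A : PAutomaton σ) : PAutomaton σ where
  Q := A.Q
  E := {pe : A.Q × A.E // A.SilentReach pe.1 (A.src pe.2) ∧ ¬ (A.lab pe.2).IsIdentityIpomset}
  src pe := pe.1.1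
  tgt pe := A.tgt pe.1.2
  lab pe := A.lab pe.1.2
  mu := A.mu
  start := A.start
  accept := {q | ∃ r ∈ A.accept, A.SilentReach q r}

theorem isPA_removeSilent (hA : A.IsPA) : A.removeSilent.IsPA := by
  have ⟨hQ, hE, hmu, hlab, hsrc, htgt⟩ := hA
  exact ⟨hQ, Subtype.finite, hmu, fun pe => hlab _,
    fun pe => (hsrc _).trans (pe.2.1.mu_iso hA).symm, fun pe => htgt _⟩

theorem noSilent_removeSilent (A : PAutomaton σ) : A.removeSilent.NoSilent :=
  fun pe => pe.2.2

theorem Rec.exists_removeSilent (hA : A.IsPA) {p r : A.Q} {α : Path A p r} {R : PreIpomset σ}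
    (h : Rec α R) {q : A.Q} (hq : A.SilentReach q p) :
    ∃ r', A.SilentReach r' r ∧
      ∃ β : Path A.removeSilent q r', Rec (A := A.removeSilent) β R := by
  induction h generalizing q with
  | nil p R h =>
    exact ⟨q, hq, .nil (A := A.removeSilent) q,
      .nil (A := A.removeSilent) q R ((hq.mu_iso hA).idOf.trans h)⟩
  | cons e _ _ hglue ih =>
    by_cases he : (A.lab e).IsIdentityIpomset
    · obtain ⟨r', hr', β, hβ⟩ := ih (hq.tail ⟨e, he, rfl, rfl⟩)
      exact ⟨r', hr', β, hβ.of_iso (hglue.iso_of_isIdentity he)⟩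
    · obtain ⟨r', hr', β, hβ⟩ := ih .refl
      let t : A.removeSilent.E := ⟨(q, e), hq, he⟩
      exact ⟨r', hr', .cons (A := A.removeSilent) t β,
        .cons (A := A.removeSilent) t β hβ hglue⟩

theorem Rec.exists_of_removeSilent (hA : A.IsPA) {p r : A.removeSilent.Q}
    {β : Path A.removeSilent p r} {R : PreIpomset σ} (h : Rec (A := A.removeSilent) β R)
    {r₀ : A.Q} (hr : A.SilentReach r r₀) :
    ∃ α : Path A p r₀, Rec α R := by
  induction h with
  | nil q R h => exact hr.exists_rec hA (.nil r₀ R ((hr.mu_iso hA).symm.idOf.trans h))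
  | cons pe _ _ hglue ih =>
    obtain ⟨α, hα⟩ := ih hr
    exact pe.2.1.exists_rec hA (.cons pe.1.2 α hα hglue)

theorem lang_removeSilent (hA : A.IsPA) : A.removeSilent.lang = A.lang := by
  ext R
  constructor
  · rintro ⟨p, r, β, hp, ⟨r₀, hr₀, hr⟩, hβ⟩
    obtain ⟨α, hα⟩ := hβ.exists_of_removeSilent hA hr
    exact ⟨p, r₀, α, hp, hr₀, hα⟩
  · rintro ⟨p, r, α, hp, hr, hα⟩
    obtain ⟨r', hr', β, hβ⟩ := hα.exists_removeSilent hA .refl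
    exact ⟨p, r', β, hp, ⟨r, hr, hr'⟩, hβ⟩

end PAutomaton

theorem pautomaton_no_silent_general {σ : Type} (A : PAutomaton σ) (hA : A.IsPA) :
    ∃ A' : PAutomaton σ, A'.IsPA ∧ A'.NoSilent ∧ A'.lang = A.lang :=
  ⟨A.removeSilent, PAutomaton.isPA_removeSilent hA, A.noSilent_removeSilent,
    PAutomaton.lang_removeSilent hA⟩

/-- For every P-automaton there exists a P-automaton without silent
transitions that recognizes the same language. -/
theorem pautomaton_no_silent {σ : Type} [Finite σ] (A : PAutomaton σ) (hA : A.IsPA) :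
    ∃ A' : PAutomaton σ, A'.IsPA ∧ A'.NoSilent ∧ A'.lang = A.lang :=
  pautomaton_no_silent_general A hA

end HDA
end

section
/- For every gST-automaton 𝒜 without silent transitions there exists a gST-automaton 𝒜' with L(𝒜') = L(𝒜) satisfying: (a) no transition of 𝒜' has its target in the set of initial states, and (b) no transition of 𝒜' has its source in the set of accepting states. -/
open scoped Classical

namespace HDA

open PreIpomset PAutomaton

/-- Auxiliary automaton: states and transitions carry two boolean tags marking
"fresh initial copy" and "fresh accepting copy". -/
def dupAut {σ : Type} (A : PAutomaton σ) : PAutomaton σ where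
  Q := A.Q × Bool × Bool
  E := A.E × Bool × Bool
  src := fun e => (A.src e.1, e.2.1, false)
  tgt := fun e => (A.tgt e.1, false, e.2.2)
  lab := fun e => A.lab e.1
  mu := fun q => A.mu q.1
  start := {q | q.1 ∈ A.start ∧ q.2.1 = true ∧ (q.2.2 = true → q.1 ∈ A.accept)}
  accept := {q | q.1 ∈ A.accept ∧ q.2.2 = true ∧ (q.2.1 = true → q.1 ∈ A.start)}

/-- Projection of paths in `dupAut A` onto paths in `A`. -/
def projPath {σ : Type} (A : PAutomaton σ) :
    ∀ {p r : (dupAut A).Q}, Path (dupAut A) p r → Path A p.1 r.1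
  | _, _, .nil q => .nil q.1
  | _, _, .cons e rest => .cons e.1 (projPath A rest)

theorem rec_proj {σ : Type} (A : PAutomaton σ) {p r : (dupAut A).Q}
    {α' : Path (dupAut A) p r} {R : PreIpomset σ} (h : Rec α' R) :
    Rec (projPath A α') R := by
  induction h with
  | nil q R h => exact Rec.nil q.1 R h
  | cons e rest h hg ih => exact Rec.cons e.1 (projPath A rest) ih hg

theorem lift_main {σ : Type} {A : PAutomaton σ} {q r : A.Q} {α : Path A q r}
    {R : PreIpomset σ} (h : Rec α R) :
    ∀ b1 : Bool,
      (∃ α' : Path (dupAut A) (q, b1, false) (r, false, true), Rec α' R) ∨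
      (∃ _ : q = r, Iso (A.mu q).idOf R) := by
  induction h with
  | nil q R hIso =>
    intro b1
    exact Or.inr ⟨rfl, hIso⟩
  | cons e rest hrec hg ih =>
    intro b1
    rcases ih false with ⟨β, hβ⟩ | ⟨hqr, hIso⟩
    · exact Or.inl ⟨Path.cons (A := dupAut A) (e, b1, false) β, Rec.cons _ _ hβ hg⟩
    · subst hqr
      exact Or.inl ⟨Path.cons (A := dupAut A) (e, b1, true) (Path.nil _),
        Rec.cons _ _ (Rec.nil _ _ hIso) hg⟩

/-- For every gST-automaton without silent transitions there is a
language-equivalent gST-automaton satisfying (a) no transition enters an initial state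
and (b) no transition leaves an accepting state. -/
theorem gst_conditions_ab {σ : Type} [Finite σ] (A : PAutomaton σ)
    (hA : A.IsPA) (hg : A.IsGST) (hns : A.NoSilent) :
    ∃ A' : PAutomaton σ, A'.IsPA ∧ A'.IsGST ∧
      (∀ e, A'.tgt e ∉ A'.start) ∧ (∀ e, A'.src e ∉ A'.accept) ∧
      A'.lang = A.lang := by
  obtain ⟨hQ, hE, hmu, hlab, hsrc, htgt⟩ := hA
  refine ⟨dupAut A, ⟨?_, ?_, fun q => hmu q.1, fun e => hlab e.1,
      fun e => hsrc e.1, fun e => htgt e.1⟩, fun e => hg e.1, ?_, ?_, ?_⟩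
  · haveI := hQ; exact (inferInstance : Finite (A.Q × Bool × Bool))
  · haveI := hE; exact (inferInstance : Finite (A.E × Bool × Bool))
  · rintro e ⟨-, h, -⟩
    exact Bool.false_ne_true h
  · rintro e ⟨-, h, -⟩
    exact Bool.false_ne_true h
  · ext R
    constructor
    · rintro ⟨p, r, α', hp, hr, hrec⟩
      exact ⟨p.1, r.1, projPath A α', hp.1, hr.1, rec_proj A hrec⟩
    · rintro ⟨p, r, α, hp, hr, hrec⟩
      rcases lift_main hrec true with ⟨α', hα'⟩ | ⟨hpr, hIso⟩
      · exact ⟨(p, true, false), (r, false, true), α',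
          ⟨hp, rfl, fun h => nomatch h⟩, ⟨hr, rfl, fun h => nomatch h⟩, hα'⟩
      · subst hpr
        exact ⟨(p, true, true), (p, true, true), Path.nil _,
          ⟨hp, rfl, fun _ => hr⟩, ⟨hr, rfl, fun _ => hp⟩, Rec.nil _ _ hIso⟩

end HDA
end
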